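/- For X* ~ Sk(λ₁, λ₂) with mean μ = λ₁ - λ₂, the partial mean of the left-censored variable satisfies E[X* · 1_{X* ≥ 1}] = μ · P(X* ≥ 0) + λ₂ · (P(X* = 0) + P(X* = 1)). -/

import Mathlib

open Real Filter

/-- PMF of the Poisson distribution with mean `l`. -/
noncomputable def poissonPMF (l : ℝ) (n : ℕ) : ℝ :=
  Real.exp (-l) * l ^ n / n.factorial

/-- PMF of the Skellam distribution `Sk(l1, l2)`, i.e. the distribution of the
difference `X₁ - X₂` of independent Poisson variables with means `l1`, `l2`,
obtained by the convolution formula. -/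
noncomputable def skellamPMF (l1 l2 : ℝ) (x : ℤ) : ℝ :=
  ∑' k : ℕ, (if 0 ≤ x + (k : ℤ) then poissonPMF l1 (x + (k : ℤ)).toNat else 0) * poissonPMF l2 k

/-- Modified Bessel function of the first kind of integer order `n`,
`I_n(z) = (z/2)^|n| ∑_{k} (z/2)^{2k}/(k! (k+|n|)!)`, with `I_{-n} = I_n`. -/
noncomputable def besselI (n : ℤ) (z : ℝ) : ℝ :=
  (z / 2) ^ n.natAbs *
    ∑' k : ℕ, (z / 2) ^ (2 * k) / ((k.factorial : ℝ) * (k + n.natAbs).factorial)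

/-- Upper tail probability `P(X* ≥ a)` of the Skellam distribution. -/
noncomputable def skellamTail (l1 l2 : ℝ) (a : ℤ) : ℝ :=
  ∑' x : ℤ, if a ≤ x then skellamPMF l1 l2 x else 0

/-!
Writing the Skellam PMF as `p(x) = ∑ₖ q₁(x + k) q₂(k)` with Poisson PMFs `qᵢ` on `ℤ`, and using
`y qᵢ(y) = λᵢ qᵢ(y - 1)` after splitting `x = (x + k) - k`, gives the pointwise Stein recurrence
`x p(x) = λ₁ p(x - 1) - λ₂ p(x + 1)`. Summing it over `x ≥ 1` yields `λ₁ P(X* ≥ 0) - λ₂ P(X* ≥ 2)`,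
and `P(X* ≥ 2) = P(X* ≥ 0) - p(0) - p(1)`.
-/

section TailSums

variable {f : ℤ → ℝ}

theorem Summable.ite_le (hf : Summable f) (a : ℤ) :
    Summable fun x => if a ≤ x then f x else 0 :=
  (hf.indicator (Set.Ici a)).congr fun x => by simp [Set.indicator_apply]

theorem tsum_ite_le_comp_add (f : ℤ → ℝ) (a c : ℤ) :
    ∑' x, (if a ≤ x then f (x + c) else 0) = ∑' x, if a + c ≤ x then f x else 0 := by
  rw [← (Equiv.subRight c).tsum_eq]
  refine tsum_congr fun x => ?_
  simp only [Equiv.subRight_apply, sub_add_cancel, le_sub_iff_add_le]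

theorem tsum_ite_le_eq_add (hf : Summable f) (a : ℤ) :
    ∑' x, (if a ≤ x then f x else 0) = f a + ∑' x, if a + 1 ≤ x then f x else 0 := by
  rw [(hf.ite_le a).tsum_eq_add_tsum_ite a, if_pos le_rfl]
  congr 1
  refine tsum_congr fun x => ?_
  rcases lt_trichotomy x a with h | rfl | h
  · rw [if_neg h.ne, if_neg (by omega), if_neg (by omega)]
  · rw [if_pos rfl, if_neg (by omega)]
  · rw [if_neg h.ne', if_pos h.le, if_pos (by omega)]

end TailSums

section CrossCorrelation

/-- The law of `X - Y` for independent integer-valued `X ∼ f` and `Y ∼ g`. -/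
noncomputable def crossCorrelation (f g : ℤ → ℝ) (x : ℤ) : ℝ :=
  ∑' k, f (x + k) * g k

variable {f g : ℤ → ℝ}

theorem summable_crossCorrelation_prod (hf : Summable f) (hg : Summable g) :
    Summable fun p : ℤ × ℤ => f (p.1 + p.2) * g p.2 := by
  have hinj : Function.Injective fun p : ℤ × ℤ => (p.1 + p.2, p.2) := by
    rintro ⟨x, k⟩ ⟨y, j⟩ h
    simp only [Prod.mk.injEq] at h
    grind
  have hprod : Summable fun p : ℤ × ℤ => f p.1 * g p.2 :=
    summable_mul_of_summable_norm hf.norm hg.norm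
  exact hprod.comp_injective (i := fun p : ℤ × ℤ => (p.1 + p.2, p.2)) hinj

theorem summable_crossCorrelation (hf : Summable f) (hg : Summable g) :
    Summable (crossCorrelation f g) :=
  (summable_crossCorrelation_prod hf hg).prod

theorem hasSum_crossCorrelation (hf : Summable f) (hg : Summable g) (x : ℤ) :
    HasSum (fun k => f (x + k) * g k) (crossCorrelation f g x) :=
  ((summable_crossCorrelation_prod hf hg).prod_factor x).hasSum

theorem mul_crossCorrelation (hf : Summable f) (hg : Summable g) {a b : ℝ}
    (hfa : ∀ y : ℤ, (y : ℝ) * f y = a * f (y - 1)) (hgb : ∀ y : ℤ, (y : ℝ) * g y = b * g (y - 1))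
    (x : ℤ) :
    (x : ℝ) * crossCorrelation f g x =
      a * crossCorrelation f g (x - 1) - b * crossCorrelation f g (x + 1) := by
  have hprev := (hasSum_crossCorrelation hf hg (x - 1)).mul_left a
  have hnext : HasSum (fun k => f (x + k) * g (k - 1)) (crossCorrelation f g (x + 1)) := by
    rw [← (Equiv.addRight 1).hasSum_iff]
    convert hasSum_crossCorrelation hf hg (x + 1) using 2 with k
    simp only [Function.comp_apply, Equiv.coe_addRight, add_sub_cancel_right]
    ring_nf
  refine ((hasSum_crossCorrelation hf hg x).mul_left (x : ℝ)).unique ?_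
  have hterm : ∀ k : ℤ, (x : ℝ) * (f (x + k) * g k) =
      a * (f (x - 1 + k) * g k) - b * (f (x + k) * g (k - 1)) := by
    intro k
    have hfk := hfa (x + k)
    push_cast at hfk
    rw [show x + k - 1 = x - 1 + k by ring] at hfk
    linear_combination g k * hfk - f (x + k) * hgb k
  simpa only [hterm] using hprev.sub (hnext.mul_left b)

end CrossCorrelation

section Poisson

noncomputable def intPoissonPMF (l : ℝ) (x : ℤ) : ℝ :=
  if 0 ≤ x then poissonPMF l x.toNat else 0

theorem intPoissonPMF_natCast (l : ℝ) (n : ℕ) : intPoissonPMF l n = poissonPMF l n := by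
  simp [intPoissonPMF]

theorem intPoissonPMF_of_neg (l : ℝ) {x : ℤ} (hx : x < 0) : intPoissonPMF l x = 0 :=
  if_neg hx.not_ge

theorem support_intPoissonPMF_subset (l : ℝ) :
    Function.support (intPoissonPMF l) ⊆ Set.range Nat.cast := by
  intro x hx
  by_contra hneg
  exact hx (intPoissonPMF_of_neg l (by contrapose! hneg; exact ⟨x.toNat, by omega⟩))

theorem summable_poissonPMF (l : ℝ) : Summable (poissonPMF l) := by
  refine ((Real.summable_pow_div_factorial l).mul_left (exp (-l))).congr fun n => ?_
  simp only [poissonPMF, mul_div_assoc]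

theorem summable_intPoissonPMF (l : ℝ) : Summable (intPoissonPMF l) := by
  refine (Nat.cast_injective.summable_iff fun x hx => ?_).1 ?_
  · exact Function.notMem_support.1 fun hsupp => hx (support_intPoissonPMF_subset l hsupp)
  · simpa [Function.comp_def, intPoissonPMF_natCast] using summable_poissonPMF l

theorem succ_mul_poissonPMF_succ (l : ℝ) (n : ℕ) :
    ((n : ℝ) + 1) * poissonPMF l (n + 1) = l * poissonPMF l n := by
  simp only [poissonPMF, Nat.factorial_succ, Nat.cast_mul, Nat.cast_succ, pow_succ]
  field_simp

theorem mul_intPoissonPMF (l : ℝ) (x : ℤ) :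
    (x : ℝ) * intPoissonPMF l x = l * intPoissonPMF l (x - 1) := by
  rcases lt_trichotomy x 0 with hx | rfl | hx
  · simp [intPoissonPMF_of_neg, hx, show x - 1 < 0 by omega]
  · simp [intPoissonPMF_of_neg]
  · obtain ⟨n, rfl⟩ : ∃ n : ℕ, x = n + 1 := ⟨(x - 1).toNat, by omega⟩
    rw [add_sub_cancel_right, ← Nat.cast_succ, intPoissonPMF_natCast, intPoissonPMF_natCast]
    push_cast
    exact succ_mul_poissonPMF_succ l n

end Poisson

theorem skellamPMF_eq_crossCorrelation (l1 l2 : ℝ) :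
    skellamPMF l1 l2 = crossCorrelation (intPoissonPMF l1) (intPoissonPMF l2) := by
  funext x
  change ∑' k : ℕ, intPoissonPMF l1 (x + k) * poissonPMF l2 k = _
  simp_rw [← intPoissonPMF_natCast l2]
  exact Nat.cast_injective.tsum_eq (f := fun k => intPoissonPMF l1 (x + k) * intPoissonPMF l2 k)
    ((Function.support_mul_subset_right _ _).trans (support_intPoissonPMF_subset l2))

theorem summable_skellamPMF (l1 l2 : ℝ) : Summable (skellamPMF l1 l2) := by
  rw [skellamPMF_eq_crossCorrelation]
  exact summable_crossCorrelation (summable_intPoissonPMF l1) (summable_intPoissonPMF l2)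

theorem mul_skellamPMF (l1 l2 : ℝ) (x : ℤ) :
    (x : ℝ) * skellamPMF l1 l2 x =
      l1 * skellamPMF l1 l2 (x - 1) - l2 * skellamPMF l1 l2 (x + 1) := by
  rw [skellamPMF_eq_crossCorrelation]
  exact mul_crossCorrelation (summable_intPoissonPMF l1) (summable_intPoissonPMF l2)
    (mul_intPoissonPMF l1) (mul_intPoissonPMF l2) x

theorem skellamTail_eq_add (l1 l2 : ℝ) (a : ℤ) :
    skellamTail l1 l2 a = skellamPMF l1 l2 a + skellamTail l1 l2 (a + 1) :=
  tsum_ite_le_eq_add (summable_skellamPMF l1 l2) a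

theorem skellam_partial_mean_general (l1 l2 : ℝ) :
    ∑' x : ℤ, (if 1 ≤ x then (x : ℝ) else 0) * skellamPMF l1 l2 x =
      (l1 - l2) * skellamTail l1 l2 0
        + l2 * (skellamPMF l1 l2 0 + skellamPMF l1 l2 1) := by
  have htail0 : skellamTail l1 l2 0 = skellamPMF l1 l2 0 + skellamTail l1 l2 1 :=
    skellamTail_eq_add l1 l2 0
  have htail1 : skellamTail l1 l2 1 = skellamPMF l1 l2 1 + skellamTail l1 l2 2 :=
    skellamTail_eq_add l1 l2 1
  set p := skellamPMF l1 l2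
  have hp : Summable p := summable_skellamPMF l1 l2
  have hprev : Summable fun x : ℤ => if 1 ≤ x then p (x + -1) else 0 :=
    (hp.comp_injective (add_left_injective (-1))).ite_le 1
  have hnext : Summable fun x : ℤ => if 1 ≤ x then p (x + 1) else 0 :=
    (hp.comp_injective (add_left_injective 1)).ite_le 1
  have htail : ∀ a, skellamTail l1 l2 a = ∑' x, if a ≤ x then p x else 0 := fun _ => rfl
  calc ∑' x : ℤ, (if 1 ≤ x then (x : ℝ) else 0) * p x
      = ∑' x : ℤ, (l1 * (if 1 ≤ x then p (x + -1) else 0) -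
          l2 * (if 1 ≤ x then p (x + 1) else 0)) := by
        refine tsum_congr fun x => ?_
        split_ifs
        · rw [← sub_eq_add_neg, mul_skellamPMF]
        · ring
    _ = l1 * skellamTail l1 l2 0 - l2 * skellamTail l1 l2 2 := by
        rw [(hprev.mul_left l1).tsum_sub (hnext.mul_left l2), tsum_mul_left, tsum_mul_left,
          tsum_ite_le_comp_add, tsum_ite_le_comp_add, htail, htail]
        norm_num
    _ = _ := by
        linear_combination l2 * htail0 + l2 * htail1

theorem skellam_partial_mean (l1 l2 : ℝ) (h1 : 0 < l1) (h2 : 0 < l2) :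
    ∑' x : ℤ, (if 1 ≤ x then (x : ℝ) else 0) * skellamPMF l1 l2 x =
      (l1 - l2) * skellamTail l1 l2 0
        + l2 * (skellamPMF l1 l2 0 + skellamPMF l1 l2 1) :=
  skellam_partial_mean_general l1 l2
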